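/- Let σ^a : T_a → T be a codegeneracy map and let δ^e : T' → T be a coface map that does not eliminate the edge a. Then there is an induced coface map δ^e : T'_a → T_a, and the square commutes: σ^a ∘ δ^e = δ^e ∘ σ^a as graphical maps T'_a → T. -/

import Mathlib

/-!  A formalization of the graphical category of finite (connected) multigraphs
with legs, loops and parallel edges, following the half-edge encoding:
a graph is given by a finite set of vertices, a finite set of half-edges,
an involution pairing the two halves of an edge (legs and free edges have a
fixed or unattached half), and an attachment map.  Graphical maps are encoded
by their action on (half-)edges together with the assignment of an embedded
subgraph (given by its vertex set and its ι-closed set of half-edges) to each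
vertex; `PreGMap.EqOn G f g` is equality of graphical maps out of `G`. -/

structure HalfEdgeGraph where
  V : Finset ℕ
  H : Finset ℕ
  ι : ℕ → ℕ
  att : ℕ → Option ℕ

namespace HalfEdgeGraph

/-- Two vertices are adjacent when some edge joins them. -/
def Adj (G : HalfEdgeGraph) (v w : ℕ) : Prop :=
  ∃ h ∈ G.H, G.att h = some v ∧ G.att (G.ι h) = some w

/-- Connectedness of a graph. -/
def Connected (G : HalfEdgeGraph) : Prop :=
  ∀ v ∈ G.V, ∀ w ∈ G.V, Relation.ReflTransGen G.Adj v w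

/-- Well-formedness: the involution and the attachment are internal to the
graph, and the graph is connected (graphs are finite connected multigraphs). -/
def Wf (G : HalfEdgeGraph) : Prop :=
  (∀ h ∈ G.H, G.ι h ∈ G.H) ∧
  (∀ h ∈ G.H, G.ι (G.ι h) = h) ∧
  (∀ h ∈ G.H, ∀ v, G.att h = some v → v ∈ G.V) ∧
  G.Connected

/-- `h` is (a half of) an inner edge: both ends are attached to vertices. -/
def IsInnerEdge (G : HalfEdgeGraph) (h : ℕ) : Prop :=
  h ∈ G.H ∧ h ≠ G.ι h ∧ (G.att h).isSome ∧ (G.att (G.ι h)).isSome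

/-- `h` is (a half of) a loop: an edge from a vertex to itself. -/
def IsLoop (G : HalfEdgeGraph) (h : ℕ) : Prop :=
  h ∈ G.H ∧ h ≠ G.ι h ∧ ∃ v, G.att h = some v ∧ G.att (G.ι h) = some v

/-- The number of non-leg edges incident to `v` (a loop counts once). -/
def nonLegEdgeCount (G : HalfEdgeGraph) (v : ℕ) : ℕ :=
  (G.H.filter fun h => G.att h = some v ∧ (G.att (G.ι h)).isSome ∧ G.att (G.ι h) ≠ some v).card +
  (G.H.filter fun h => G.att h = some v ∧ G.att (G.ι h) = some v ∧ h ≠ G.ι h).card / 2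

/-- An outer vertex: at most one incident non-leg edge. -/
def IsOuterVertex (G : HalfEdgeGraph) (v : ℕ) : Prop :=
  v ∈ G.V ∧ G.nonLegEdgeCount v ≤ 1

/-- The corolla at `v`, as an embedded subgraph (vertex set and half-edges). -/
def corolla (G : HalfEdgeGraph) (v : ℕ) : Finset ℕ × Finset ℕ :=
  ({v}, G.H.filter fun h => G.att h = some v ∨ G.att (G.ι h) = some v)

/-- `G/b`: contract the (non-loop) inner edge `b`, merging its two endpoints
into the single vertex `min x y`. -/
def contract (G : HalfEdgeGraph) (b : ℕ) : HalfEdgeGraph :=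
  let x := (G.att b).getD 0
  let y := (G.att (G.ι b)).getD 0
  let z := min x y
  let H' := G.H.filter fun h => h ≠ b ∧ h ≠ G.ι b
  { V := insert z ((G.V.erase x).erase y)
    H := H'
    ι := fun h => if h ∈ H' then G.ι h else h
    att := fun h => if h ∈ H' then
        (if G.att h = some x ∨ G.att h = some y then some z else G.att h) else none }

/-- `G/v`: delete the (outer) vertex `v` together with its legs and loops;
edges joining `v` to other vertices become legs. -/
def delVertex (G : HalfEdgeGraph) (v : ℕ) : HalfEdgeGraph :=
  let H' := G.H.filter fun h =>
    ¬ ((G.att h = some v ∨ G.att (G.ι h) = some v) ∧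
       (G.att h = some v ∨ G.att h = none) ∧
       (G.att (G.ι h) = some v ∨ G.att (G.ι h) = none))
  { V := G.V.erase v
    H := H'
    ι := fun h => if h ∈ H' then G.ι h else h
    att := fun h => if h ∈ H' then (if G.att h = some v then none else G.att h) else none }

/-- `G/ℓ`: snip the loop (or cut the edge) `l` into two legs, with fresh
half-edges `a` and `b` as the new free ends. -/
def snip (G : HalfEdgeGraph) (l a b : ℕ) : HalfEdgeGraph :=
  let H' := insert a (insert b G.H)
  { V := G.V
    H := H'
    ι := fun h => if h ∈ H' then
        (if h = l then a else if h = a then l else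
         if h = G.ι l then b else if h = b then G.ι l else G.ι h) else h
    att := fun h => if h ∈ H' then (if h = a ∨ h = b then none else G.att h) else none }

/-- `G_b`: subdivide the edge `b` by one new bivalent vertex `u`,
splitting `b` into the two edges `{b, n₁}` and `{n₂, ι b}`. -/
def subdiv (G : HalfEdgeGraph) (b u n₁ n₂ : ℕ) : HalfEdgeGraph :=
  let H' := insert n₁ (insert n₂ G.H)
  { V := insert u G.V
    H := H'
    ι := fun h => if h ∈ H' then
        (if h = b then n₁ else if h = n₁ then b else
         if h = n₂ then (if G.ι b = b then n₂ else G.ι b) else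
         if h = G.ι b then n₂ else G.ι h) else h
    att := fun h => if h ∈ H' then (if h = n₁ ∨ h = n₂ then some u else G.att h) else none }

/-- Validity of the data of a subdivision: `b` is an edge and the new names are fresh. -/
def IsDegen (G : HalfEdgeGraph) (b u n₁ n₂ : ℕ) : Prop :=
  b ∈ G.H ∧ u ∉ G.V ∧ n₁ ∉ G.H ∧ n₂ ∉ G.H ∧ n₁ ≠ n₂

end HalfEdgeGraph

/-- The data of a graphical map: a map on half-edges (inducing the map `f₀` on
edges) and, for each vertex, an embedded subgraph of the target
(its vertex set together with its set of half-edges). -/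
structure PreGMap where
  e : ℕ → ℕ
  vimg : ℕ → Finset ℕ × Finset ℕ

/-- Composition of graphical maps: compose on edges; the embedded subgraph at a
vertex is assembled by substituting the images of the vertices of its image. -/
def PreGMap.comp (g f : PreGMap) : PreGMap where
  e := g.e ∘ f.e
  vimg := fun v =>
    ((f.vimg v).1.biUnion fun w => (g.vimg w).1,
     (f.vimg v).2.image g.e ∪ (f.vimg v).1.biUnion fun w => (g.vimg w).2)

/-- Equality of graphical maps out of `G` (extensional equality of `f₀` and `f₁`). -/
def PreGMap.EqOn (G : HalfEdgeGraph) (f g : PreGMap) : Prop :=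
  (∀ h ∈ G.H, f.e h = g.e h) ∧ ∀ v ∈ G.V, f.vimg v = g.vimg v

namespace HalfEdgeGraph

/-- The identity graphical map of `G`. -/
def idMap (G : HalfEdgeGraph) : PreGMap := ⟨id, G.corolla⟩

/-- The inner coface map `δ^b : G/b → G`: identity on edges, sending the merged
vertex to the embedded barbell subgraph of `G` around `b`, and every other
vertex to its corolla. -/
def innerCoface (G : HalfEdgeGraph) (b : ℕ) : PreGMap :=
  let x := (G.att b).getD 0
  let y := (G.att (G.ι b)).getD 0
  { e := id
    vimg := fun v => if v = min x y then
        ({x, y}, G.H.filter fun h =>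
          G.att h = some x ∨ G.att h = some y ∨
          G.att (G.ι h) = some x ∨ G.att (G.ι h) = some y)
      else G.corolla v }

/-- The outer coface map `δ^v : G/v → G`: identity on edges, every vertex to its corolla. -/
def outerCoface (G : HalfEdgeGraph) (_v : ℕ) : PreGMap := ⟨id, G.corolla⟩

/-- The cosnip map `δ^ℓ : G/ℓ → G`: both new legs are sent to the loop `l`,
identity on vertices. -/
def cosnip (G : HalfEdgeGraph) (l a b : ℕ) : PreGMap :=
  { e := fun h => if h = a then G.ι l else if h = b then l else h
    vimg := G.corolla }

/-- The codegeneracy map `σ^b : G_b → G`: the two halves of the subdivided edge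
are sent to `b`, the new bivalent vertex to the edge graph `η_b`, and every
other vertex to its corolla. -/
def codegeneracy (G : HalfEdgeGraph) (b u n₁ n₂ : ℕ) : PreGMap :=
  { e := fun h => if h = n₁ then G.ι b else if h = n₂ then b else h
    vimg := fun v => if v = u then ((∅ : Finset ℕ), ({b, G.ι b} : Finset ℕ))
      else G.corolla v }

/-- The conditions for `f` to be a graphical map `G → G'`: it maps edges to
edges, each vertex to an embedded subgraph of `G'`, the vertex sets of the
images are disjoint and together exhaust the vertices of `G'`, and boundaries
match: each half-edge at `v` is sent into the subgraph at `v`. -/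
def IsGMap (G G' : HalfEdgeGraph) (f : PreGMap) : Prop :=
  (∀ h ∈ G.H, f.e h ∈ G'.H ∧ (f.e (G.ι h) = f.e h ∨ f.e (G.ι h) = G'.ι (f.e h))) ∧
  (∀ v ∈ G.V, (f.vimg v).1 ⊆ G'.V ∧ (f.vimg v).2 ⊆ G'.H) ∧
  (∀ v ∈ G.V, ∀ w ∈ G.V, v ≠ w → Disjoint (f.vimg v).1 (f.vimg w).1) ∧
  G.V.biUnion (fun v => (f.vimg v).1) = G'.V ∧
  (∀ v ∈ G.V, ∀ h ∈ G.H, G.att h = some v → f.e h ∈ (f.vimg v).2)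

end HalfEdgeGraph

/-- The three kinds of coface maps: inner cofaces, outer cofaces, and cosnips. -/
inductive CofaceKind where
  | inner (e : ℕ)
  | outer (v : ℕ)
  | snip (l a b : ℕ)

namespace HalfEdgeGraph

/-- The source of the coface map of kind `k` into `G`. -/
def cofaceSource (G : HalfEdgeGraph) : CofaceKind → HalfEdgeGraph
  | .inner e => G.contract e
  | .outer v => G.delVertex v
  | .snip l a b => G.snip l a b

/-- The coface map of kind `k` into `G`. -/
def cofaceMap (G : HalfEdgeGraph) : CofaceKind → PreGMap
  | .inner e => G.innerCoface e
  | .outer v => G.outerCoface v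
  | .snip l a b => G.cosnip l a b

/-- Validity of a coface map into `G`: inner cofaces contract non-loop inner
edges, outer cofaces delete outer vertices, cosnips snip loops (with fresh
names, leaving the graph connected). -/
def IsCoface (G : HalfEdgeGraph) : CofaceKind → Prop
  | .inner e => G.IsInnerEdge e ∧ ¬ G.IsLoop e
  | .outer v => G.IsOuterVertex v
  | .snip l a b => G.IsLoop l ∧ a ∉ G.H ∧ b ∉ G.H ∧ a ≠ b ∧ (G.snip l a b).Connected

end HalfEdgeGraph

/-- `CofaceSeq G₁ G₂ f`: `f : G₁ → G₂` is a composite of a sequence of coface maps. -/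
inductive CofaceSeq : HalfEdgeGraph → HalfEdgeGraph → PreGMap → Prop where
  | nil (G : HalfEdgeGraph) : CofaceSeq G G G.idMap
  | cons {G₁ G₂ : HalfEdgeGraph} {f : PreGMap} (k : CofaceKind) (hk : G₂.IsCoface k)
      (h : CofaceSeq G₁ (G₂.cofaceSource k) f) :
      CofaceSeq G₁ G₂ ((G₂.cofaceMap k).comp f)

/-- `DegenSeq G₁ G₂ f`: `f : G₁ → G₂` is a composite of a sequence of codegeneracy maps. -/
inductive DegenSeq : HalfEdgeGraph → HalfEdgeGraph → PreGMap → Prop where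
  | nil (G : HalfEdgeGraph) : DegenSeq G G G.idMap
  | cons {G₁ G₂ : HalfEdgeGraph} {f : PreGMap} (b u n₁ n₂ : ℕ) (hb : G₂.IsDegen b u n₁ n₂)
      (h : DegenSeq G₁ (G₂.subdiv b u n₁ n₂) f) :
      DegenSeq G₁ G₂ ((G₂.codegeneracy b u n₁ n₂).comp f)

/-- `ElemSeq G₁ G₂ f`: `f : G₁ → G₂` is an arbitrary composite of coface and
codegeneracy maps. -/
inductive ElemSeq : HalfEdgeGraph → HalfEdgeGraph → PreGMap → Prop where
  | nil (G : HalfEdgeGraph) : ElemSeq G G G.idMap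
  | coface {G₁ G₂ : HalfEdgeGraph} {f : PreGMap} (k : CofaceKind) (hk : G₂.IsCoface k)
      (h : ElemSeq G₁ (G₂.cofaceSource k) f) :
      ElemSeq G₁ G₂ ((G₂.cofaceMap k).comp f)
  | degen {G₁ G₂ : HalfEdgeGraph} {f : PreGMap} (b u n₁ n₂ : ℕ) (hb : G₂.IsDegen b u n₁ n₂)
      (h : ElemSeq G₁ (G₂.subdiv b u n₁ n₂) f) :
      ElemSeq G₁ G₂ ((G₂.codegeneracy b u n₁ n₂).comp f)

/-! The subdivision only adds the fresh names `u`, `n₁`, `n₂` and rewires the involution at `a`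
and `ι a`, and a coface that keeps `a` does not interact with any of this, so the two sources
agree. For the maps, both composites send `u` to the edge `{a, ι a}`. Every other vertex goes
under the coface to a subgraph of `T` cut out by a condition on attachments that fails at `u`.
The codegeneracy maps the subgraph of `T_a` cut out by the same condition onto it, and on the
other side of the square that subgraph already contains the image of the corolla at the vertex. -/

namespace HalfEdgeGraph

theorem ext {G G' : HalfEdgeGraph} (hV : G.V = G'.V) (hH : G.H = G'.H) (hι : G.ι = G'.ι)
    (hatt : G.att = G'.att) : G = G' := by
  cases G; cases G'; congr

theorem corolla_fst (G : HalfEdgeGraph) (v : ℕ) : (G.corolla v).1 = {v} := rfl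

theorem comp_codegeneracy_vimg_self (G : HalfEdgeGraph) (b u n₁ n₂ : ℕ) (g : PreGMap) :
    (g.comp (G.codegeneracy b u n₁ n₂)).vimg u = (∅, {g.e b, g.e (G.ι b)}) := by
  simp [PreGMap.comp, codegeneracy]

theorem comp_codegeneracy_vimg_of_ne (G : HalfEdgeGraph) {b u n₁ n₂ v : ℕ} (g : PreGMap)
    (hv : v ≠ u) :
    (g.comp (G.codegeneracy b u n₁ n₂)).vimg v =
      ((g.vimg v).1, (G.corolla v).2.image g.e ∪ (g.vimg v).2) := by
  simp [PreGMap.comp, codegeneracy, hv, corolla_fst]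

theorem codegeneracy_e_congr {G G' : HalfEdgeGraph} {b : ℕ} (h : G.ι b = G'.ι b) (u n₁ n₂ : ℕ) :
    (G.codegeneracy b u n₁ n₂).e = (G'.codegeneracy b u n₁ n₂).e := by
  simp only [codegeneracy, h]

theorem innerCoface_vimg (G : HalfEdgeGraph) {e x y : ℕ} (hx : G.att e = some x)
    (hy : G.att (G.ι e) = some y) (v : ℕ) :
    (G.innerCoface e).vimg v = if v = min x y then
      ({x, y}, G.H.filter fun h => (G.att h = some x ∨ G.att h = some y) ∨
        (G.att (G.ι h) = some x ∨ G.att (G.ι h) = some y))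
    else G.corolla v := by
  simp only [innerCoface, hx, hy, Option.getD_some, or_assoc]

theorem contract_corolla_subset_innerCoface_vimg (G : HalfEdgeGraph) (e v : ℕ) :
    ((G.contract e).corolla v).2 ⊆ ((G.innerCoface e).vimg v).2 := by
  intro h
  simp only [corolla, contract, innerCoface, Finset.mem_filter]
  grind

theorem delVertex_corolla_subset (G : HalfEdgeGraph) (w v : ℕ) :
    ((G.delVertex w).corolla v).2 ⊆ (G.corolla v).2 := by
  intro h
  simp only [corolla, delVertex, Finset.mem_filter]
  grind

theorem image_cosnip_snip_corolla_subset (G : HalfEdgeGraph) {l c d : ℕ} (hl : l ∈ G.H)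
    (hιl : G.ι l ∈ G.H) (hll : G.ι (G.ι l) = l) (v : ℕ) :
    ((G.snip l c d).corolla v).2.image (G.cosnip l c d).e ⊆ (G.corolla v).2 := by
  intro h
  simp only [corolla, snip, cosnip, Finset.mem_filter, Finset.mem_image, Finset.mem_insert]
  grind

structure FreshSubdiv (T : HalfEdgeGraph) (a u n₁ n₂ : ℕ) : Prop where
  ι_mem : ∀ h ∈ T.H, T.ι h ∈ T.H
  ι_ι : ∀ h ∈ T.H, T.ι (T.ι h) = h
  a_mem : a ∈ T.H
  n₁_not_mem : n₁ ∉ T.H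
  n₂_not_mem : n₂ ∉ T.H
  n₁_ne_n₂ : n₁ ≠ n₂
  att_ne_u : ∀ h ∈ T.H, T.att h ≠ some u

namespace FreshSubdiv

theorem of_wf {T : HalfEdgeGraph} {a u n₁ n₂ : ℕ} (hT : T.Wf) (hdeg : T.IsDegen a u n₁ n₂) :
    T.FreshSubdiv a u n₁ n₂ :=
  ⟨hT.1, hT.2.1, hdeg.1, hdeg.2.2.1, hdeg.2.2.2.1, hdeg.2.2.2.2,
    fun h hh hu => hdeg.2.1 (hT.2.2.1 h hh u hu)⟩

variable {T : HalfEdgeGraph} {a u n₁ n₂ : ℕ} (hC : T.FreshSubdiv a u n₁ n₂)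
include hC

theorem basic_facts :
    a ∈ T.H ∧ T.ι a ∈ T.H ∧ T.ι (T.ι a) = a ∧ n₁ ∉ T.H ∧ n₂ ∉ T.H ∧ n₁ ≠ n₂ :=
  ⟨hC.a_mem, hC.ι_mem a hC.a_mem, hC.ι_ι a hC.a_mem, hC.n₁_not_mem, hC.n₂_not_mem, hC.n₁_ne_n₂⟩

theorem subdiv_att_of_mem {h : ℕ} (hh : h ∈ T.H) : (T.subdiv a u n₁ n₂).att h = T.att h := by
  have := hC.basic_facts
  simp only [subdiv, Finset.mem_insert]
  grind

theorem subdiv_ι_of_mem {h : ℕ} (hh : h ∈ T.H) (ha : h ≠ a) (hιa : h ≠ T.ι a) :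
    (T.subdiv a u n₁ n₂).ι h = T.ι h := by
  have := hC.basic_facts
  simp only [subdiv, Finset.mem_insert]
  grind

theorem corolla_subdiv_self : ((T.subdiv a u n₁ n₂).corolla u).2 = {n₁, n₂, a, T.ι a} := by
  have := hC.basic_facts; have := hC.att_ne_u
  ext h
  have := hC.ι_mem h; have := hC.ι_ι h
  simp only [corolla, subdiv, Finset.mem_filter, Finset.mem_insert, Finset.mem_singleton]
  grind

theorem ne_of_isLoop_subdiv {l : ℕ} (hl : (T.subdiv a u n₁ n₂).IsLoop l) :
    l ≠ a ∧ l ≠ T.ι a := by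
  have := hC.basic_facts
  have := hC.att_ne_u a hC.a_mem; have := hC.att_ne_u _ (hC.ι_mem a hC.a_mem)
  simp only [IsLoop, subdiv, Finset.mem_insert] at hl
  grind

/-- The preimages of `a` are `a` and `n₂`, those of `ι a` are `ι a` and `n₁`; since `p` fails
at `u`, a half of the subdivided edge is selected exactly when its outer end is. -/
theorem image_codegeneracy_filter (p : Option ℕ → Prop) [DecidablePred p] (hpu : ¬ p (some u)) :
    ((T.subdiv a u n₁ n₂).H.filter fun h =>
        p ((T.subdiv a u n₁ n₂).att h) ∨
          p ((T.subdiv a u n₁ n₂).att ((T.subdiv a u n₁ n₂).ι h))).image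
      (T.codegeneracy a u n₁ n₂).e =
      T.H.filter fun h => p (T.att h) ∨ p (T.att (T.ι h)) := by
  have := hC.basic_facts
  ext k
  simp only [Finset.mem_image, Finset.mem_filter, subdiv, codegeneracy, Finset.mem_insert]
  constructor
  · rintro ⟨h, ⟨hmem, hp⟩, rfl⟩
    have := hC.ι_mem h; have := hC.ι_ι h
    grind
  · rintro ⟨hk, hp⟩
    have := hC.ι_mem k hk; have := hC.ι_ι k hk
    by_cases hka : k = a
    · grind
    by_cases hkιa : k = T.ι a
    · grind
    exact ⟨k, by grind⟩

theorem codegeneracy_comp_vimg_of_filter {f : PreGMap} {v : ℕ} {S : Finset ℕ}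
    (p : Option ℕ → Prop) [DecidablePred p] (hpu : ¬ p (some u)) (hS : ∀ w ∈ S, p (some w))
    (hf : f.vimg v = (S, (T.subdiv a u n₁ n₂).H.filter fun h =>
        p ((T.subdiv a u n₁ n₂).att h) ∨
          p ((T.subdiv a u n₁ n₂).att ((T.subdiv a u n₁ n₂).ι h)))) :
    ((T.codegeneracy a u n₁ n₂).comp f).vimg v =
      (S, T.H.filter fun h => p (T.att h) ∨ p (T.att (T.ι h))) := by
  have hσ : ∀ w ∈ S, (T.codegeneracy a u n₁ n₂).vimg w = T.corolla w := fun w hw => by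
    have hwu : w ≠ u := by rintro rfl; exact hpu (hS _ hw)
    simp [codegeneracy, hwu]
  simp only [PreGMap.comp, hf, hC.image_codegeneracy_filter p hpu,
    Finset.biUnion_congr rfl fun w hw => congrArg Prod.fst (hσ w hw),
    Finset.biUnion_congr rfl fun w hw => congrArg Prod.snd (hσ w hw),
    corolla_fst, Finset.biUnion_singleton_eq_self]
  refine Prod.ext rfl (Finset.union_eq_left.mpr (Finset.biUnion_subset.mpr fun w hw h hh => ?_))
  have := hS w hw
  simp only [corolla, Finset.mem_filter] at hh ⊢
  grind

theorem codegeneracy_comp_vimg_corolla {f : PreGMap} {v : ℕ} (hv : v ≠ u)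
    (hf : f.vimg v = (T.subdiv a u n₁ n₂).corolla v) :
    ((T.codegeneracy a u n₁ n₂).comp f).vimg v = T.corolla v :=
  hC.codegeneracy_comp_vimg_of_filter (· = some v) (by simpa using hv.symm) (by simp) hf

theorem codegeneracy_comp_vimg_self {f : PreGMap}
    (hf : f.vimg u = (T.subdiv a u n₁ n₂).corolla u) :
    ((T.codegeneracy a u n₁ n₂).comp f).vimg u = (∅, {a, T.ι a}) := by
  have := hC.basic_facts
  simp only [PreGMap.comp, hf, hC.corolla_subdiv_self, corolla_fst, Finset.singleton_biUnion,
    codegeneracy, if_true, Prod.mk.injEq, true_and]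
  ext h
  simp only [Finset.mem_union, Finset.mem_image, Finset.mem_insert, Finset.mem_singleton]
  grind

theorem eqOn_codegeneracy_comp {T' : HalfEdgeGraph} {δ δ' : PreGMap}
    (hedge : ∀ h ∈ (T'.subdiv a u n₁ n₂).H,
      (T.codegeneracy a u n₁ n₂).e (δ'.e h) = δ.e ((T'.codegeneracy a u n₁ n₂).e h))
    (hδ'u : δ'.vimg u = (T.subdiv a u n₁ n₂).corolla u)
    (hδa : δ.e a = a) (hδιa : δ.e (T'.ι a) = T.ι a)
    (hvert : ∀ v ∈ T'.V, v ≠ u → ((T.codegeneracy a u n₁ n₂).comp δ').vimg v = δ.vimg v)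
    (hbdry : ∀ v ∈ T'.V, v ≠ u → (T'.corolla v).2.image δ.e ⊆ (δ.vimg v).2) :
    PreGMap.EqOn (T'.subdiv a u n₁ n₂)
      ((T.codegeneracy a u n₁ n₂).comp δ') (δ.comp (T'.codegeneracy a u n₁ n₂)) := by
  refine ⟨hedge, fun v hv => ?_⟩
  by_cases hvu : v = u
  · subst hvu
    rw [hC.codegeneracy_comp_vimg_self hδ'u, comp_codegeneracy_vimg_self, hδa, hδιa]
  · have hv : v ∈ T'.V := by simpa [subdiv, hvu] using hv
    rw [hvert v hv hvu, comp_codegeneracy_vimg_of_ne _ _ hvu,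
      Finset.union_eq_right.mpr (hbdry v hv hvu)]

section Inner

variable {e x y : ℕ} (he : e ∈ T.H) (hx : T.att e = some x) (hy : T.att (T.ι e) = some y)
  (ha : a ∈ (T.contract e).H)
include he hx hy ha

theorem contract_subdiv :
    (T.subdiv a u n₁ n₂).contract e = (T.contract e).subdiv a u n₁ n₂ := by
  have := hC.basic_facts; have := hC.ι_mem e he; have := hC.ι_ι e he
  have := hC.att_ne_u e he; have := hC.att_ne_u _ (hC.ι_mem e he)
  simp only [contract, Finset.mem_filter] at ha
  apply HalfEdgeGraph.ext
  · ext v; simp only [contract, subdiv, Finset.mem_insert, Finset.mem_erase]; grind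
  · ext h; simp only [contract, subdiv, Finset.mem_insert, Finset.mem_filter]; grind
  · funext h; simp only [contract, subdiv, Finset.mem_insert, Finset.mem_filter]; grind
  · funext h; simp only [contract, subdiv, Finset.mem_insert, Finset.mem_filter]; grind

theorem eqOn_codegeneracy_comp_innerCoface :
    PreGMap.EqOn ((T.contract e).subdiv a u n₁ n₂)
      ((T.codegeneracy a u n₁ n₂).comp ((T.subdiv a u n₁ n₂).innerCoface e))
      ((T.innerCoface e).comp ((T.contract e).codegeneracy a u n₁ n₂)) := by
  have := hC.basic_facts
  simp only [contract, Finset.mem_filter] at ha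
  have hιa : (T.contract e).ι a = T.ι a := by simp only [contract, Finset.mem_filter]; grind
  have hx' : (T.subdiv a u n₁ n₂).att e = some x := by rw [hC.subdiv_att_of_mem he, hx]
  have hy' : (T.subdiv a u n₁ n₂).att ((T.subdiv a u n₁ n₂).ι e) = some y := by
    rw [hC.subdiv_ι_of_mem he (by grind) (by grind), hC.subdiv_att_of_mem (hC.ι_mem e he), hy]
  have hxu : x ≠ u := by rintro rfl; exact hC.att_ne_u e he hx
  have hyu : y ≠ u := by rintro rfl; exact hC.att_ne_u _ (hC.ι_mem e he) hy
  have hmin : u ≠ min x y := by omega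
  refine hC.eqOn_codegeneracy_comp (fun h _ => ?_) ?_ rfl (by rw [hιa]; rfl) (fun v _ hv => ?_)
    (fun v _ _ => ?_)
  · rw [codegeneracy_e_congr hιa]; rfl
  · rw [innerCoface_vimg _ hx' hy', if_neg hmin]
  · rw [innerCoface_vimg _ hx hy]
    split_ifs with hvm
    · exact hC.codegeneracy_comp_vimg_of_filter (fun o => o = some x ∨ o = some y)
        (by simpa using ⟨hxu.symm, hyu.symm⟩) (by simp)
        (by rw [innerCoface_vimg _ hx' hy', if_pos hvm])
    · exact hC.codegeneracy_comp_vimg_corolla hv (by rw [innerCoface_vimg _ hx' hy', if_neg hvm])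
  · rw [show (T.innerCoface e).e = id from rfl, Finset.image_id]
    exact contract_corolla_subset_innerCoface_vimg T e v

end Inner

section Outer

variable {w : ℕ} (ha : a ∈ (T.delVertex w).H)
include ha

theorem delVertex_subdiv (hw : w ≠ u) :
    (T.subdiv a u n₁ n₂).delVertex w = (T.delVertex w).subdiv a u n₁ n₂ := by
  have := hC.basic_facts; have := hC.ι_mem; have := hC.ι_ι
  simp only [delVertex, Finset.mem_filter] at ha
  apply HalfEdgeGraph.ext
  · ext v; simp only [delVertex, subdiv, Finset.mem_insert, Finset.mem_erase]; grind
  · ext h; simp only [delVertex, subdiv, Finset.mem_insert, Finset.mem_filter]; grind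
  · funext h; simp only [delVertex, subdiv, Finset.mem_insert, Finset.mem_filter]; grind
  · funext h; simp only [delVertex, subdiv, Finset.mem_insert, Finset.mem_filter]; grind

theorem eqOn_codegeneracy_comp_outerCoface :
    PreGMap.EqOn ((T.delVertex w).subdiv a u n₁ n₂)
      ((T.codegeneracy a u n₁ n₂).comp ((T.subdiv a u n₁ n₂).outerCoface w))
      ((T.outerCoface w).comp ((T.delVertex w).codegeneracy a u n₁ n₂)) := by
  have hιa : (T.delVertex w).ι a = T.ι a := by
    simp only [delVertex] at ha ⊢
    rw [if_pos ha]
  refine hC.eqOn_codegeneracy_comp (fun h _ => ?_) rfl rfl (by rw [hιa]; rfl)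
    (fun v _ hv => hC.codegeneracy_comp_vimg_corolla hv rfl) (fun v _ _ => ?_)
  · rw [codegeneracy_e_congr hιa]; rfl
  · rw [show (T.outerCoface w).e = id from rfl, Finset.image_id]
    exact delVertex_corolla_subset T w v

end Outer

section Snip

variable {l c d : ℕ} (hl : l ∈ T.H) (hla : l ≠ a) (hlιa : l ≠ T.ι a)
  (hc : c ∉ (T.subdiv a u n₁ n₂).H) (hd : d ∉ (T.subdiv a u n₁ n₂).H)
include hl hla hlιa hc hd

theorem snip_subdiv :
    (T.subdiv a u n₁ n₂).snip l c d = (T.snip l c d).subdiv a u n₁ n₂ := by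
  have := hC.basic_facts; have := hC.ι_mem l hl; have := hC.ι_ι l hl
  simp only [subdiv, Finset.mem_insert, not_or] at hc hd
  refine HalfEdgeGraph.ext rfl ?_ ?_ ?_
  · ext h; simp only [snip, subdiv, Finset.mem_insert]; grind
  · funext h; simp only [snip, subdiv, Finset.mem_insert]; grind (splits := 40)
  · funext h; simp only [snip, subdiv, Finset.mem_insert]; grind

theorem eqOn_codegeneracy_comp_cosnip :
    PreGMap.EqOn ((T.snip l c d).subdiv a u n₁ n₂)
      ((T.codegeneracy a u n₁ n₂).comp ((T.subdiv a u n₁ n₂).cosnip l c d))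
      ((T.cosnip l c d).comp ((T.snip l c d).codegeneracy a u n₁ n₂)) := by
  have := hC.basic_facts; have := hC.ι_mem l hl; have := hC.ι_ι l hl
  simp only [subdiv, Finset.mem_insert, not_or] at hc hd
  have hιa : (T.snip l c d).ι a = T.ι a := by simp only [snip, Finset.mem_insert]; grind
  refine hC.eqOn_codegeneracy_comp (fun h _ => ?_) rfl (by simp only [cosnip]; grind)
    (by simp only [hιa, cosnip]; grind) (fun v _ hv => hC.codegeneracy_comp_vimg_corolla hv rfl)
    (fun v _ _ => image_cosnip_snip_corolla_subset T hl (hC.ι_mem l hl) (hC.ι_ι l hl) v)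
  simp only [codegeneracy, cosnip, subdiv, hιa]
  grind

end Snip

end FreshSubdiv

end HalfEdgeGraph

/-- Let `σ^a : T_a → T` be a codegeneracy map and let
`δ^e : T' → T` be a coface map (of any kind `k`) that does not eliminate the
edge `a`.  Then there is an induced coface map `δ^e : T'_a → T_a` (so that
`(T_a)' = (T')_a`), and the square commutes: `σ^a ∘ δ^e = δ^e ∘ σ^a` as
graphical maps `T'_a → T`. -/
theorem coface_codegeneracy_commute (T : HalfEdgeGraph) (hT : T.Wf) (a u n₁ n₂ : ℕ)
    (hdeg : T.IsDegen a u n₁ n₂) (k : CofaceKind) (hk : T.IsCoface k)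
    (hk' : (T.subdiv a u n₁ n₂).IsCoface k)
    (hnoelim : a ∈ (T.cofaceSource k).H) :
    (T.subdiv a u n₁ n₂).cofaceSource k = (T.cofaceSource k).subdiv a u n₁ n₂ ∧
    PreGMap.EqOn ((T.subdiv a u n₁ n₂).cofaceSource k)
      ((T.codegeneracy a u n₁ n₂).comp ((T.subdiv a u n₁ n₂).cofaceMap k))
      ((T.cofaceMap k).comp ((T.cofaceSource k).codegeneracy a u n₁ n₂)) := by
  have hC := HalfEdgeGraph.FreshSubdiv.of_wf hT hdeg
  cases k with
  | inner e =>
    obtain ⟨⟨he, -, hx, hy⟩, -⟩ := hk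
    obtain ⟨x, hx⟩ := Option.isSome_iff_exists.mp hx
    obtain ⟨y, hy⟩ := Option.isSome_iff_exists.mp hy
    have hsrc := hC.contract_subdiv he hx hy hnoelim
    refine ⟨hsrc, ?_⟩
    rw [HalfEdgeGraph.cofaceSource, hsrc]
    exact hC.eqOn_codegeneracy_comp_innerCoface he hx hy hnoelim
  | outer w =>
    have hsrc := hC.delVertex_subdiv hnoelim fun hwu => hdeg.2.1 (hwu ▸ hk.1)
    refine ⟨hsrc, ?_⟩
    rw [HalfEdgeGraph.cofaceSource, hsrc]
    exact hC.eqOn_codegeneracy_comp_outerCoface hnoelim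
  | snip l c d =>
    obtain ⟨hl, hc, hd, -⟩ := hk'
    obtain ⟨hla, hlιa⟩ := hC.ne_of_isLoop_subdiv hl
    have hsrc := hC.snip_subdiv hk.1.1 hla hlιa hc hd
    refine ⟨hsrc, ?_⟩
    rw [HalfEdgeGraph.cofaceSource, hsrc]
    exact hC.eqOn_codegeneracy_comp_cosnip hk.1.1 hla hlιa hc hd
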